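/- arXiv:2210.01631 — 5 statements merged into one kernel-verified Lean document; each statement's English description precedes it below -/
import Mathlib

section
/- Every first-countable compact Hausdorff admissible right topological (CHART) group is metrizable. -/
/-!
The topological centre `Λ` contains a countable dense set `L`: for each basic neighbourhood `U`
of `1`, compactness gives finitely many `l ∈ Λ` such that every `x` has some `l * x ∈ U`, and the
union of these finite sets over a countable base at `1` is dense. As `{1}` is a compact `Gδ`,
some continuous `f : G → ℝ` takes the value `f 1` only at `1`. The map `x ↦ (f (l * x))_{l ∈ L}`
is continuous because `L ⊆ Λ`, and injective: if it identifies `x` and `y`, the continuous maps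
`g ↦ f (g * x)` and `g ↦ f (g * y)` agree on `L`, hence at `g = x⁻¹`, which forces `x⁻¹ * y = 1`.
So `G` embeds into the metrizable space `ℝ^L`.
-/

open Filter Set Topology TopologicalSpace

/-- The topological centre `Λ(G)`. -/
def topologicalCenter (G : Type*) [Mul G] [TopologicalSpace G] : Set G :=
  {g | Continuous fun h : G => g * h}

section RightTopologicalGroup

variable {G : Type*} [Group G] [TopologicalSpace G]

theorem exists_finite_subset_topologicalCenter_forall_mul_mem [CompactSpace G]
    (hright : ∀ h : G, Continuous fun g : G => g * h) (hadm : Dense (topologicalCenter G))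
    {U : Set G} (hU : IsOpen U) (hne : U.Nonempty) :
    ∃ t ⊆ topologicalCenter G, t.Finite ∧ ∀ x, ∃ l ∈ t, l * x ∈ U := by
  have hcover : univ ⊆ ⋃ l ∈ topologicalCenter G, (fun h => l * h) ⁻¹' U := by
    intro x _
    obtain ⟨u, hu⟩ := hne
    obtain ⟨l, hlU, hl⟩ := hadm.inter_open_nonempty _ (hU.preimage (hright x))
      ⟨u * x⁻¹, by simpa using hu⟩
    exact mem_biUnion hl hlU
  obtain ⟨t, ht, hfin, htcover⟩ :=
    isCompact_univ.elim_finite_subcover_image (fun l hl => hU.preimage hl) hcover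
  refine ⟨t, ht, hfin, fun x => ?_⟩
  simpa using htcover (mem_univ x)

theorem exists_countable_dense_subset_topologicalCenter [CompactSpace G]
    [FirstCountableTopology G] (hright : ∀ h : G, Continuous fun g : G => g * h)
    (hadm : Dense (topologicalCenter G)) :
    ∃ L ⊆ topologicalCenter G, L.Countable ∧ Dense L := by
  obtain ⟨U, hU, hbasis⟩ := (nhds_basis_opens (1 : G)).exists_antitone_subbasis
  choose t htΛ htfin ht using fun n =>
    exists_finite_subset_topologicalCenter_forall_mul_mem hright hadm (hU n).2 ⟨1, (hU n).1⟩
  refine ⟨⋃ n, t n, iUnion_subset htΛ, countable_iUnion fun n => (htfin n).countable, ?_⟩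
  refine dense_iff_inter_open.2 fun V hV ⟨x, hx⟩ => ?_
  have hVx : (fun g => g * x) ⁻¹' V ∈ 𝓝 1 :=
    (hV.preimage (hright x)).mem_nhds (by simpa using hx)
  obtain ⟨n, -, hn⟩ := hbasis.toHasBasis.mem_iff.1 hVx
  obtain ⟨l, hlt, hl⟩ := ht n x⁻¹
  exact ⟨l, by simpa using hn hl, mem_iUnion_of_mem n hlt⟩

theorem injective_apply_mul_of_dense {Y : Type*} [TopologicalSpace Y] [T2Space Y]
    (hright : ∀ h : G, Continuous fun g : G => g * h) {L : Set G} (hL : Dense L)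
    {f : G → Y} (hf : Continuous f) (hf1 : f ⁻¹' {f 1} = {1}) :
    Function.Injective fun x (l : L) => f (l * x) := by
  intro x y hxy
  have hagree : (fun g => f (g * x)) = fun g => f (g * y) :=
    (hf.comp (hright x)).ext_on hL (hf.comp (hright y)) fun l hl => congrFun hxy ⟨l, hl⟩
  have h1 : x⁻¹ * y ∈ f ⁻¹' {f 1} := by simpa using (congrFun hagree x⁻¹).symm
  rw [hf1] at h1
  exact inv_mul_eq_one.1 h1

end RightTopologicalGroup

/-- Every first-countable CHART group (compact Hausdorff admissible right
topological group) is metrizable. -/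
theorem metrizable_of_chart_firstCountable {G : Type*} [Group G] [TopologicalSpace G]
    [CompactSpace G] [T2Space G] [FirstCountableTopology G]
    (hright : ∀ h : G, Continuous fun g : G => g * h)
    (hadm : Dense {g : G | Continuous fun h : G => g * h}) :
    TopologicalSpace.MetrizableSpace G := by
  obtain ⟨L, hLΛ, hLcount, hLdense⟩ :=
    exists_countable_dense_subset_topologicalCenter hright hadm
  have : Countable L := hLcount.to_subtype
  obtain ⟨f, hf_preimage, -⟩ := exists_continuous_one_zero_of_isCompact_of_isGδ
    isCompact_singleton (IsGδ.singleton (1 : G)) isClosed_empty (disjoint_empty _)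
  have hf_one : f 1 = 1 := by simpa using hf_preimage.subset (mem_singleton 1)
  have hf_fiber : f ⁻¹' {f 1} = {1} := by rw [hf_one, ← hf_preimage]
  have hcont : Continuous fun x (l : L) => f (l * x) :=
    continuous_pi fun l => f.continuous.comp (hLΛ l.2)
  exact (hcont.isClosedEmbedding
    (injective_apply_mul_of_dense hright hLdense f.continuous hf_fiber)).isEmbedding.metrizableSpace
end

section
/- (Namioka) Every metrizable compact Hausdorff admissible right topological (CHART) group is a topological group (i.e. multiplication is jointly continuous and inversion is continuous). -/
/-! Namioka's argument. An element of the closure of the topological centre is the limit of a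
sequence in it, so its left translation is a pointwise limit of continuous maps; by Baire it has
a point of continuity, and conjugating by right translations makes it continuous everywhere. Thus
multiplication is separately continuous, and a second Baire argument, using uniform continuity on
the compact metric factor, gives joint continuity along a whole fibre `{a} × G`, which translations
spread to all of `G × G`. Inversion is then continuous because the group of units, embedded in
`G × Gᵐᵒᵖ` as `{(g, g⁻¹)}`, is compact and maps continuously and bijectively onto `G`. -/

open Filter Topology Set

theorem exists_forall_mem_interior_of_iUnion_of_closed {X ι : Type*} [TopologicalSpace X]
    [BaireSpace X] [Nonempty X] [Countable ι] {F : ℕ → ι → Set X}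
    (hclosed : ∀ k i, IsClosed (F k i)) (hcover : ∀ k, ⋃ i, F k i = univ) :
    ∃ x, ∀ k, ∃ i, x ∈ interior (F k i) := by
  have hdense : Dense (⋂ k, ⋃ i, interior (F k i)) :=
    dense_iInter_of_isOpen (fun k => isOpen_iUnion fun i => isOpen_interior)
      fun k => dense_iUnion_interior_of_closed (hclosed k) (hcover k)
  exact hdense.nonempty.imp fun x hx => by simpa only [mem_iInter, mem_iUnion] using hx

theorem exists_continuousAt_of_tendsto_pointwise {X Y : Type*} [TopologicalSpace X]
    [BaireSpace X] [Nonempty X] [PseudoMetricSpace Y] {f : ℕ → X → Y} {g : X → Y}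
    (hf : ∀ n, Continuous (f n)) (hlim : ∀ x, Tendsto (fun n => f n x) atTop (𝓝 (g x))) :
    ∃ x, ContinuousAt g x := by
  set F : ℕ → ℕ → Set X := fun k N => {x | ∀ n ≥ N, dist (f n x) (f N x) ≤ 1 / (k + 1)}
  have hclosed : ∀ k N, IsClosed (F k N) := fun k N => by
    simp only [F, ofPred_forall]
    exact isClosed_iInter fun n => isClosed_iInter fun _ =>
      isClosed_le ((hf n).dist (hf N)) continuous_const
  have hcover : ∀ k, ⋃ N, F k N = univ := fun k => eq_univ_of_forall fun x => by
    obtain ⟨N, hN⟩ := Metric.cauchySeq_iff'.1 (hlim x).cauchySeq _ Nat.one_div_pos_of_nat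
    exact mem_iUnion.2 ⟨N, fun n hn => (hN n hn).le⟩
  have hdist_limit : ∀ k N, ∀ y ∈ F k N, dist (g y) (f N y) ≤ 1 / (k + 1) := fun k N y hy =>
    le_of_tendsto ((hlim y).dist tendsto_const_nhds) (eventually_atTop.2 ⟨N, hy⟩)
  obtain ⟨x, hx⟩ := exists_forall_mem_interior_of_iUnion_of_closed hclosed hcover
  refine ⟨x, Metric.continuousAt_iff'.2 fun ε hε => ?_⟩
  obtain ⟨k, hk⟩ := exists_nat_one_div_lt (div_pos hε three_pos)
  obtain ⟨N, hN⟩ := hx k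
  filter_upwards [isOpen_interior.mem_nhds hN,
    Metric.continuousAt_iff'.1 (hf N).continuousAt _ Nat.one_div_pos_of_nat] with y hy hNy
  calc dist (g y) (g x) ≤ dist (g y) (f N y) + dist (f N y) (f N x) + dist (f N x) (g x) :=
        dist_triangle4 _ _ _ _
    _ < 1 / (k + 1) + 1 / (k + 1) + 1 / (k + 1) := by
        rw [dist_comm (f N x)]
        exact add_lt_add_of_lt_of_le
          (add_lt_add_of_le_of_lt (hdist_limit k N y (interior_subset hy)) hNy)
          (hdist_limit k N x (interior_subset hN))
    _ < ε := by linarith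

theorem exists_forall_continuousAt_uncurry_of_separately_continuous {X Y Z : Type*}
    [TopologicalSpace X] [BaireSpace X] [Nonempty X] [PseudoMetricSpace Y] [CompactSpace Y]
    [PseudoMetricSpace Z] {f : X → Y → Z}
    (hx : ∀ y, Continuous fun x => f x y) (hy : ∀ x, Continuous (f x)) :
    ∃ a, ∀ y, ContinuousAt (Function.uncurry f) (a, y) := by
  set F : ℕ → ℕ → Set X := fun k n =>
    {x | ∀ y y', dist y y' < 1 / (n + 1) → dist (f x y) (f x y') ≤ 1 / (k + 1)}
  have hclosed : ∀ k n, IsClosed (F k n) := fun k n => by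
    simp only [F, ofPred_forall]
    exact isClosed_iInter fun y => isClosed_iInter fun y' => isClosed_iInter fun _ =>
      isClosed_le ((hx y).dist (hx y')) continuous_const
  have hcover : ∀ k, ⋃ n, F k n = univ := fun k => eq_univ_of_forall fun x => by
    obtain ⟨δ, hδ, hfδ⟩ := Metric.uniformContinuous_iff.1
      (CompactSpace.uniformContinuous_of_continuous (hy x)) _ (Nat.one_div_pos_of_nat (n := k))
    obtain ⟨n, hn⟩ := exists_nat_one_div_lt hδ
    exact mem_iUnion.2 ⟨n, fun y y' hyy' => (hfδ (hyy'.trans hn)).le⟩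
  obtain ⟨a, ha⟩ := exists_forall_mem_interior_of_iUnion_of_closed hclosed hcover
  refine ⟨a, fun y => Metric.continuousAt_iff'.2 fun ε hε => ?_⟩
  obtain ⟨k, hk⟩ := exists_nat_one_div_lt (half_pos hε)
  obtain ⟨n, hn⟩ := ha k
  have hnear : ∀ᶠ x in 𝓝 a, x ∈ interior (F k n) ∧ dist (f x y) (f a y) < 1 / (k + 1) :=
    (isOpen_interior.eventually_mem hn).and
      (Metric.continuousAt_iff'.1 (hx y).continuousAt _ Nat.one_div_pos_of_nat)
  filter_upwards [prod_mem_nhds hnear (Metric.ball_mem_nhds y (Nat.one_div_pos_of_nat (n := n)))]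
    with p ⟨⟨hpF, hpy⟩, hp⟩
  calc dist (f p.1 p.2) (f a y) ≤ dist (f p.1 p.2) (f p.1 y) + dist (f p.1 y) (f a y) :=
        dist_triangle _ _ _
    _ < 1 / (k + 1) + 1 / (k + 1) := add_lt_add_of_le_of_lt (interior_subset hpF _ _ hp) hpy
    _ < ε := by linarith

section RightTopologicalGroup

variable {G : Type*} [Group G] [TopologicalSpace G]

theorem continuous_mul_left_of_continuousAt (hright : ∀ h : G, Continuous fun x => x * h)
    {g h₀ : G} (hg : ContinuousAt (fun x => g * x) h₀) : Continuous fun x => g * x := by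
  refine continuous_iff_continuousAt.2 fun h => ?_
  have : ContinuousAt (fun x => g * (x * (h⁻¹ * h₀)) * (h₀⁻¹ * h)) h :=
    (hright _).continuousAt.comp (hg.comp_of_eq (hright _).continuousAt (by group))
  convert this using 1
  funext x
  group

theorem continuous_mul_left_of_mem_closure [BaireSpace G] [TopologicalSpace.MetrizableSpace G]
    (hright : ∀ h : G, Continuous fun x => x * h) {g : G}
    (hg : g ∈ closure {g : G | Continuous fun x => g * x}) : Continuous fun x => g * x := by
  let := TopologicalSpace.metrizableSpaceMetric G
  obtain ⟨u, hu, hlim⟩ := mem_closure_iff_seq_limit.1 hg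
  obtain ⟨h₀, hh₀⟩ := exists_continuousAt_of_tendsto_pointwise (g := fun x => g * x) hu
    fun x => ((hright x).tendsto g).comp hlim
  exact continuous_mul_left_of_continuousAt hright hh₀

end RightTopologicalGroup

theorem ContinuousMul.of_continuousAt_mul {G : Type*} [Group G] [TopologicalSpace G]
    [SeparatelyContinuousMul G] {a : G}
    (ha : ∀ y, ContinuousAt (fun p : G × G => p.1 * p.2) (a, y)) : ContinuousMul G := by
  refine ⟨continuous_iff_continuousAt.2 fun ⟨g, h⟩ => ?_⟩
  have hshift : Continuous fun p : G × G => (p.1 * (g⁻¹ * a), a⁻¹ * g * p.2) :=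
    (continuous_mul_const _ |>.comp continuous_fst).prodMk
      (continuous_const_mul _ |>.comp continuous_snd)
  have := (ha (a⁻¹ * g * h)).comp_of_eq (hshift.continuousAt (x := (g, h))) (by simp)
  convert this using 1
  funext p
  simp only [Function.comp_apply]
  group

theorem IsTopologicalGroup.of_compactSpace_of_continuousMul {G : Type*} [Group G]
    [TopologicalSpace G] [ContinuousMul G] [CompactSpace G] [T2Space G] :
    IsTopologicalGroup G := by
  let e : Gˣ ≃ₜ G := (Units.continuous_val (M := G)).homeoOfEquivCompactToT2
    (f := toUnits.symm.toEquiv)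
  have he : ∀ g, e.symm g = toUnits g := fun g => e.symm_apply_eq.2 rfl
  have : (fun g : G => g⁻¹) = e ∘ (fun u => u⁻¹) ∘ e.symm := by
    funext g
    simp only [Function.comp_apply, he]
    rfl
  exact { continuous_inv := this ▸ e.continuous.comp (continuous_inv.comp e.symm.continuous) }

theorem topologicalGroup_of_chart_metrizable_general {G : Type*} [Group G] [TopologicalSpace G]
    [CompactSpace G] [TopologicalSpace.MetrizableSpace G]
    (hright : ∀ h : G, Continuous fun g : G => g * h)
    (hadm : Dense {g : G | Continuous fun h : G => g * h}) :
    IsTopologicalGroup G := by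
  let := TopologicalSpace.metrizableSpaceMetric G
  have hleft : ∀ g : G, Continuous fun h => g * h :=
    fun g => continuous_mul_left_of_mem_closure hright (hadm g)
  have : SeparatelyContinuousMul G := ⟨hleft _, hright _⟩
  obtain ⟨a, ha⟩ :=
    exists_forall_continuousAt_uncurry_of_separately_continuous (f := (· * ·)) hright hleft
  have := ContinuousMul.of_continuousAt_mul ha
  exact IsTopologicalGroup.of_compactSpace_of_continuousMul

/-- (Namioka) Every metrizable CHART group (compact Hausdorff admissible right
topological group) is a topological group. -/
theorem topologicalGroup_of_chart_metrizable {G : Type*} [Group G] [TopologicalSpace G]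
    [CompactSpace G] [T2Space G] [TopologicalSpace.MetrizableSpace G]
    (hright : ∀ h : G, Continuous fun g : G => g * h)
    (hadm : Dense {g : G | Continuous fun h : G => g * h}) :
    IsTopologicalGroup G :=
  topologicalGroup_of_chart_metrizable_general hright hadm
end

section
/- (Milnes) Let G be a compact Hausdorff admissible right topological (CHART) group such that the inversion map g ↦ g⁻¹ is continuous at the identity element e. Then G is a topological group (i.e. multiplication is jointly continuous and inversion is continuous). -/
/-!
Inversion is continuous: if `g → x` and `g⁻¹ → y`, pick `l` with continuous left translation
and `l * y` near `1`. Then `l * g⁻¹ → l * y`, so by continuity of inversion at `1` and of right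
translations `x * l⁻¹` is near `1` as well. Thus `p = (x * l⁻¹)⁻¹` and `p * (x * y) = l * y` are
both near `1` for arbitrarily small neighbourhoods, which in a Hausdorff space forces `x * y = 1`.

Multiplication is then separately continuous, and joint continuity at `(1, 1)` is a compact
version of Ellis' theorem. A Grothendieck-type double-limit argument shows that a separately
continuous `f : X → K → ℝ` on compact spaces vanishing on `X × {k₀}` is uniformly small on some
`O × V` with `O` open and `V ∈ 𝓝 k₀`. Applied to `(x, k) ↦ φ (x * k)` with `φ` an Urysohn
function vanishing near `1`, it yields `p` near `1` and `A, V ∈ 𝓝 1` with `p * (A * V)` near `1`;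
hence `p` and `p * s` are near `1` for every cluster point `s` of `(a, b) ↦ a * b` at `(1, 1)`,
and again `s = 1`.
-/

open Filter Topology Set Pointwise Function

section Group

variable {G : Type*} [Group G] [TopologicalSpace G]

theorem eq_one_of_forall_mem_nhds_one_exists_mem_mul_mem [T2Space G] {s : G}
    (hs : ContinuousAt (· * s) 1) (h : ∀ U ∈ 𝓝 (1 : G), ∃ p ∈ U, p * s ∈ U) : s = 1 := by
  have hcl : MapClusterPt 1 (𝓝 1) (· * s) := mapClusterPt_iff_frequently.2 fun U hU =>
    frequently_iff.2 fun hV => (h _ (inter_mem hU hV)).imp fun p hp => ⟨hp.1.2, hp.2.1⟩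
  simpa using (eq_of_nhds_neBot (hcl.clusterPt.mono hs)).symm

theorem exists_mem_mul_mem_of_mapClusterPt_inv [RegularSpace G]
    (hright : ∀ h : G, Continuous fun g : G => g * h)
    (hadm : Dense {g : G | Continuous fun h : G => g * h})
    (hinv : ContinuousAt (fun g : G => g⁻¹) 1) {x y : G} (hy : MapClusterPt y (𝓝 x) (·⁻¹))
    {U : Set G} (hU : U ∈ 𝓝 1) : ∃ p ∈ U, p * (x * y) ∈ U := by
  have hinv' : Tendsto (·⁻¹) (𝓝 (1 : G)) (𝓝 1) := by
    simpa only [ContinuousAt, inv_one] using hinv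
  obtain ⟨C, hC, hCc, hCU⟩ := exists_mem_nhds_isClosed_subset (inter_mem hU (hinv' hU))
  have hV : C ∩ (·⁻¹) ⁻¹' C ∈ 𝓝 (1 : G) := inter_mem hC (hinv' hC)
  obtain ⟨l, hl, hly⟩ : ∃ l ∈ {g : G | Continuous fun h : G => g * h},
      l * y ∈ interior (C ∩ (·⁻¹) ⁻¹' C) :=
    hadm.exists_mem_open (isOpen_interior.preimage (hright y))
      ⟨y⁻¹, show y⁻¹ * y ∈ _ by rw [inv_mul_cancel]; exact mem_interior_iff_mem_nhds.2 hV⟩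
  have hxl : x * l⁻¹ ∈ C := by
    have hfreq : ∃ᶠ g in 𝓝 x, l * g⁻¹ ∈ interior (C ∩ (·⁻¹) ⁻¹' C) :=
      hy.frequently ((hl.tendsto y).eventually (isOpen_interior.mem_nhds hly))
    refine hCc.mem_of_frequently_of_tendsto (hfreq.mono fun g hg => ?_) ((hright l⁻¹).tendsto x)
    simpa using (interior_subset hg).2
  refine ⟨(x * l⁻¹)⁻¹, (hCU hxl).2, ?_⟩
  rw [show (x * l⁻¹)⁻¹ * (x * y) = l * y by group]
  exact (hCU (interior_subset hly).1).1

theorem continuous_inv_of_dense_continuous_mul_left [CompactSpace G] [T2Space G]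
    (hright : ∀ h : G, Continuous fun g : G => g * h)
    (hadm : Dense {g : G | Continuous fun h : G => g * h})
    (hinv : ContinuousAt (fun g : G => g⁻¹) 1) : Continuous fun g : G => g⁻¹ :=
  continuous_iff_continuousAt.2 fun _ => tendsto_nhds_of_unique_mapClusterPt fun _ hy =>
    eq_inv_of_mul_eq_one_right <| eq_one_of_forall_mem_nhds_one_exists_mem_mul_mem
      (hright _).continuousAt fun _ hU =>
        exists_mem_mul_mem_of_mapClusterPt_inv hright hadm hinv hy hU

end Group

section SeparatelyContinuous

variable {X K : Type*} [TopologicalSpace X] [TopologicalSpace K] {f : X → K → ℝ}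

theorem le_of_seq_double_limit [CompactSpace X] [CompactSpace K]
    (hrow : ∀ x, Continuous (f x)) (hcol : ∀ k, Continuous fun x => f x k)
    (x : ℕ → X) (k : ℕ → K) {δ η : ℝ} (hlarge : ∀ n m, n < m → δ ≤ f (x m) (k n))
    (hsmall : ∀ n m, n < m → f (x n) (k m) ≤ η) : δ ≤ η := by
  set 𝒰 := Ultrafilter.of (atTop : Filter ℕ)
  have h𝒰 : ∀ n, ∀ᶠ m in (𝒰 : Filter ℕ), n < m := fun n =>
    Ultrafilter.of_le _ (eventually_gt_atTop n)
  obtain ⟨x', hx⟩ : ∃ x', Tendsto x 𝒰 (𝓝 x') := ⟨_, (𝒰.map x).le_nhds_lim⟩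
  obtain ⟨k', hk⟩ : ∃ k', Tendsto k 𝒰 (𝓝 k') := ⟨_, (𝒰.map k).le_nhds_lim⟩
  have hx'k : ∀ n, δ ≤ f x' (k n) := fun n =>
    ge_of_tendsto (((hcol (k n)).tendsto x').comp hx) ((h𝒰 n).mono (hlarge n))
  have hxk' : ∀ n, f (x n) k' ≤ η := fun n =>
    le_of_tendsto (((hrow (x n)).tendsto k').comp hk) ((h𝒰 n).mono (hsmall n))
  calc δ ≤ f x' k' := ge_of_tendsto (((hrow x').tendsto k').comp hk) (.of_forall hx'k)
    _ ≤ η := le_of_tendsto (((hcol k').tendsto x').comp hx) (.of_forall hxk')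

theorem exists_seq_of_forall_exists_le_abs [Nonempty X] {k₀ : K}
    (hrow : ∀ x, ContinuousAt (f x) k₀) (hcol : ∀ k, Continuous fun x => f x k)
    (hf : ∀ x, f x k₀ = 0) {ε : ℝ} (hε : 0 < ε)
    (H : ∀ O : Set X, IsOpen O → O.Nonempty → ∀ V ∈ 𝓝 k₀, ∃ x ∈ O, ∃ k ∈ V, ε ≤ |f x k|) :
    ∃ (x : ℕ → X) (k : ℕ → K),
      ∀ n m, n < m → ε / 2 ≤ |f (x m) (k n)| ∧ |f (x n) (k m)| ≤ ε / 4 := by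
  have : Nonempty K := ⟨k₀⟩
  choose! xO hxO kO hkO hle using H
  let next (s : Set X × Set K) : Set X × Set K :=
    (s.1 ∩ {z | ε / 2 < |f z (kO s.1 s.2)|}, s.2 ∩ {w | |f (xO s.1 s.2) w| < ε / 4})
  let s (n : ℕ) : Set X × Set K := next^[n] (univ, univ)
  have hs_succ (n : ℕ) : s (n + 1) = next (s n) := iterate_succ_apply' ..
  have hs (n : ℕ) : IsOpen (s n).1 ∧ (s n).1.Nonempty ∧ (s n).2 ∈ 𝓝 k₀ := by
    induction n with
    | zero => exact ⟨isOpen_univ, univ_nonempty, univ_mem⟩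
    | succ n ih =>
      obtain ⟨hO, hne, hV⟩ := ih
      rw [hs_succ]
      refine ⟨hO.inter (isOpen_lt continuous_const (hcol _).abs),
        ⟨_, hxO _ hO hne _ hV, ?_⟩, inter_mem hV ?_⟩
      · exact (half_lt_self hε).trans_le (hle _ hO hne _ hV)
      · exact (hrow _).abs.eventually (gt_mem_nhds (by simp only [hf, abs_zero]; positivity))
  have hanti : Antitone s := antitone_nat_of_succ_le fun n => by
    rw [hs_succ]
    exact ⟨inter_subset_left, inter_subset_left⟩
  refine ⟨fun n => xO (s n).1 (s n).2, fun n => kO (s n).1 (s n).2, fun n m hnm => ?_⟩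
  obtain ⟨hO, hne, hV⟩ := hs m
  have hsub := hanti (Nat.succ_le_of_lt hnm)
  have hx := hsub.1 (hxO _ hO hne _ hV)
  have hk := hsub.2 (hkO _ hO hne _ hV)
  rw [hs_succ] at hx hk
  exact ⟨hx.2.le, hk.2.le⟩

theorem exists_isOpen_forall_abs_lt [CompactSpace X] [CompactSpace K] [Nonempty X] {k₀ : K}
    (hrow : ∀ x, Continuous (f x)) (hcol : ∀ k, Continuous fun x => f x k)
    (hf : ∀ x, f x k₀ = 0) {ε : ℝ} (hε : 0 < ε) :
    ∃ O : Set X, IsOpen O ∧ O.Nonempty ∧ ∃ V ∈ 𝓝 k₀, ∀ x ∈ O, ∀ k ∈ V, |f x k| < ε := by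
  by_contra! H
  obtain ⟨x, k, hxk⟩ :=
    exists_seq_of_forall_exists_le_abs (fun x => (hrow x).continuousAt) hcol hf hε H
  have := le_of_seq_double_limit (f := fun x k => |f x k|) (fun x => (hrow x).abs)
    (fun k => (hcol k).abs) x k (fun n m h => (hxk n m h).1) (fun n m h => (hxk n m h).2)
  linarith

end SeparatelyContinuous

section Ellis

variable {G : Type*} [Group G] [TopologicalSpace G] [SeparatelyContinuousMul G]
  [CompactSpace G] [T2Space G]

theorem exists_mem_nhds_one_mul_subset_preimage {U : Set G} (hU : U ∈ 𝓝 (1 : G)) :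
    ∃ p ∈ U, ∃ A ∈ 𝓝 (1 : G), ∃ V ∈ 𝓝 (1 : G), A * V ⊆ (p * ·) ⁻¹' U := by
  obtain ⟨C, hC, hCc, hCU⟩ := exists_mem_nhds_isClosed_subset (interior_mem_nhds.2 hU)
  have hWC : closure (interior C) ⊆ C := closure_minimal interior_subset hCc
  obtain ⟨φ, hφ0, hφ1, -⟩ := exists_continuous_zero_one_of_isClosed isClosed_closure
    isOpen_interior.isClosed_compl (disjoint_compl_right_iff_subset.2 (hWC.trans hCU))
  have : CompactSpace (closure (interior C)) :=
    isCompact_iff_compactSpace.1 isClosed_closure.isCompact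
  have : Nonempty (closure (interior C)) :=
    ⟨⟨1, subset_closure (mem_interior_iff_mem_nhds.2 hC)⟩⟩
  obtain ⟨O', hO', ⟨x₀, hx₀⟩, V, hV, hsmall⟩ :=
    exists_isOpen_forall_abs_lt (f := fun (x : closure (interior C)) k => φ (x * k)) (k₀ := 1)
      (fun x => φ.continuous.comp (continuous_const_mul _))
      (fun k => φ.continuous.comp ((continuous_mul_const k).comp continuous_subtype_val))
      (fun x => by simpa using hφ0 x.2) one_pos
  obtain ⟨O, hO, rfl⟩ := isOpen_induced_iff.1 hO'
  obtain ⟨p, hpO, hpW⟩ := mem_closure_iff.1 x₀.2 O hO hx₀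
  refine ⟨p, interior_subset (hCU (interior_subset hpW)), (p * ·) ⁻¹' (O ∩ interior C), ?_,
    V, hV, ?_⟩
  · exact (continuous_const_mul p).continuousAt.preimage_mem_nhds
      ((hO.inter isOpen_interior).mem_nhds (by simpa using ⟨hpO, hpW⟩))
  · rintro _ ⟨a, ha, v, hv, rfl⟩
    have hlt := hsmall ⟨p * a, subset_closure ha.2⟩ ha.1 v hv
    by_contra hout
    have : φ (p * a * v) = 1 := hφ1 fun h => hout (by simpa [mul_assoc] using interior_subset h)
    simp [this] at hlt

theorem tendsto_mul_nhds_one_of_compactSpace :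
    Tendsto (uncurry ((· * ·) : G → G → G)) (𝓝 1 ×ˢ 𝓝 1) (𝓝 1) := by
  refine tendsto_nhds_of_unique_mapClusterPt fun s hs =>
    eq_one_of_forall_mem_nhds_one_exists_mem_mul_mem (continuous_mul_const s).continuousAt
      fun U hU => ?_
  obtain ⟨N, hN, hNc, hNU⟩ := exists_mem_nhds_isClosed_subset hU
  obtain ⟨p, hpN, A, hA, V, hV, hAV⟩ := exists_mem_nhds_one_mul_subset_preimage hN
  refine ⟨p, hNU hpN, hNU ?_⟩
  exact (hNc.preimage (continuous_const_mul p)).mem_of_mapClusterPt hs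
    (mem_of_superset (prod_mem_prod hA hV) fun q hq => hAV (mul_mem_mul hq.1 hq.2))

end Ellis

/-- (Milnes) A CHART group (compact Hausdorff admissible right topological group)
in which inversion is continuous at the identity is a topological group. -/
theorem topologicalGroup_of_chart_continuousAt_inv_one {G : Type*} [Group G]
    [TopologicalSpace G] [CompactSpace G] [T2Space G]
    (hright : ∀ h : G, Continuous fun g : G => g * h)
    (hadm : Dense {g : G | Continuous fun h : G => g * h})
    (hinv : ContinuousAt (fun g : G => g⁻¹) 1) :
    IsTopologicalGroup G := by
  have hinv' : Continuous fun g : G => g⁻¹ :=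
    continuous_inv_of_dense_continuous_mul_left hright hadm hinv
  have : SeparatelyContinuousMul G :=
    ⟨fun {g} => by simpa [comp_def] using hinv'.comp ((hright g⁻¹).comp hinv'), hright _⟩
  refine .of_nhds_one' tendsto_mul_nhds_one_of_compactSpace (hinv'.tendsto' 1 1 inv_one)
    (fun x₀ => ?_) (fun x₀ => ?_)
  · simpa using ((Homeomorph.mulLeft x₀).map_nhds_eq 1).symm
  · simpa using ((Homeomorph.mulRight x₀).map_nhds_eq 1).symm
end

section
/- Let G be a compact Hausdorff admissible right topological (CHART) group such that the multiplication map G × G → G, (g,h) ↦ g·h, is continuous at the point (e,e), where e is the identity element. Then G is a topological group (i.e. multiplication is jointly continuous and inversion is continuous). -/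
/-!
Compactness turns statements about limits into statements about cluster points. If `c` is a
cluster point of `g⁻¹` as `g → 1`, then `c⁻¹ = g * (g⁻¹ * c⁻¹)` is a product of two elements
close to `1`, so `c = 1` and inversion is continuous at `1`. If `c` is a cluster point of `a * h`
as `h → 1`, approximate `a` by elements `l` of the topological centre: in
`a * h * l⁻¹ = (a * l⁻¹) * (l * h * l⁻¹)` both factors are close to `1`, which forces
`c * l⁻¹ → 1` as `l → a`, hence `c = a`. So all left translations are continuous, and the
continuity of multiplication at `(1, 1)` propagates to all of `G × G`.
-/

open Filter Topology

section RightTopologicalGroup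

variable {G : Type*} [Group G] [TopologicalSpace G]

lemma exists_mem_nhds_one_mul_subset_of_continuousAt
    (hmul : ContinuousAt (fun p : G × G => p.1 * p.2) (1, 1)) {N : Set G} (hN : N ∈ 𝓝 1) :
    ∃ V ∈ 𝓝 (1 : G), ∀ x ∈ V, ∀ y ∈ V, x * y ∈ N := by
  have hN' : (fun p : G × G => p.1 * p.2) ⁻¹' N ∈ 𝓝 1 ×ˢ 𝓝 1 := by
    rw [← nhds_prod_eq]
    exact hmul.preimage_mem_nhds (by simpa using hN)
  obtain ⟨P, hP, Q, hQ, hPQ⟩ := mem_prod_iff.mp hN'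
  exact ⟨P ∩ Q, inter_mem hP hQ, fun x hx y hy => @hPQ (x, y) ⟨hx.1, hy.2⟩⟩

lemma tendsto_inv_nhds_one_of_continuousAt_mul [CompactSpace G] [T2Space G]
    (hright : ∀ h : G, Continuous fun g : G => g * h)
    (hmul : ContinuousAt (fun p : G × G => p.1 * p.2) (1, 1)) :
    Tendsto (fun g : G => g⁻¹) (𝓝 1) (𝓝 1) := by
  refine tendsto_nhds_of_unique_mapClusterPt fun c hc => inv_eq_one.mp ?_
  refine pure_le_nhds_iff.mp fun N hN => ?_
  obtain ⟨V, hV, hVV⟩ := exists_mem_nhds_one_mul_subset_of_continuousAt hmul hN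
  have hcV : (fun g : G => g * c⁻¹) ⁻¹' V ∈ 𝓝 c :=
    (hright c⁻¹).continuousAt.preimage_mem_nhds (by simpa using hV)
  obtain ⟨g, hg_inv, hg⟩ := ((mapClusterPt_iff_frequently.mp hc _ hcV).and_eventually hV).exists
  simpa using hVV g hg _ hg_inv

lemma eq_of_mapClusterPt_mul_left [T3Space G]
    (hright : ∀ h : G, Continuous fun g : G => g * h)
    (hadm : Dense {g : G | Continuous fun h : G => g * h})
    (hmul : ContinuousAt (fun p : G × G => p.1 * p.2) (1, 1))
    (hinv : Tendsto (fun g : G => g⁻¹) (𝓝 1) (𝓝 1)) {a c : G}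
    (hc : MapClusterPt c (𝓝 1) (a * ·)) : c = a := by
  let W := 𝓝[{g : G | Continuous fun h : G => g * h}] a
  have : W.NeBot := mem_closure_iff_nhdsWithin_neBot.mp (hadm a)
  have hW : Tendsto (fun l : G => l * a⁻¹) W (𝓝 1) := by
    simpa using ((hright a⁻¹).tendsto a).mono_left nhdsWithin_le_nhds
  have hcl : Tendsto (fun l : G => c * l⁻¹) W (𝓝 1) := by
    rw [(closed_nhds_basis (1 : G)).tendsto_right_iff]
    rintro N ⟨hN, hN_closed⟩
    obtain ⟨V, hV, hVV⟩ := exists_mem_nhds_one_mul_subset_of_continuousAt hmul hN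
    have hal : ∀ᶠ l in W, a * l⁻¹ ∈ V := by
      simpa [Function.comp_def] using (hinv.comp hW).eventually_mem hV
    filter_upwards [hal, self_mem_nhdsWithin] with l hl (hl_centre : Continuous (l * ·))
    have hconj : Tendsto (fun h : G => l * h * l⁻¹) (𝓝 1) (𝓝 1) := by
      simpa [Function.comp_def] using ((hright l⁻¹).comp hl_centre).tendsto 1
    refine (hN_closed.preimage (hright l⁻¹)).mem_of_mapClusterPt hc ?_
    filter_upwards [hconj hV] with h hh
    simpa [mul_assoc] using hVV _ hl _ hh
  have h_one : Tendsto (fun l : G => l * c⁻¹) W (𝓝 1) := by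
    simpa [Function.comp_def] using hinv.comp hcl
  have h_ac : Tendsto (fun l : G => l * c⁻¹) W (𝓝 (a * c⁻¹)) :=
    ((hright c⁻¹).tendsto a).mono_left nhdsWithin_le_nhds
  exact (mul_inv_eq_one.mp (tendsto_nhds_unique h_ac h_one)).symm

lemma continuous_mul_left_of_dense_topologicalCentre [CompactSpace G] [T2Space G]
    (hright : ∀ h : G, Continuous fun g : G => g * h)
    (hadm : Dense {g : G | Continuous fun h : G => g * h})
    (hmul : ContinuousAt (fun p : G × G => p.1 * p.2) (1, 1)) (a : G) :
    Continuous (a * ·) := by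
  have hinv := tendsto_inv_nhds_one_of_continuousAt_mul hright hmul
  have h_one : Tendsto (a * ·) (𝓝 1) (𝓝 a) := tendsto_nhds_of_unique_mapClusterPt
    fun _ hc => eq_of_mapClusterPt_mul_left hright hadm hmul hinv hc
  refine continuous_iff_continuousAt.mpr fun b => ?_
  have hb : Tendsto (fun x : G => x * b⁻¹) (𝓝 b) (𝓝 1) := by
    simpa using (hright b⁻¹).tendsto b
  simpa [ContinuousAt, Function.comp_def, mul_assoc] using
    ((hright b).tendsto a).comp (h_one.comp hb)

end RightTopologicalGroup

/-- A CHART group (compact Hausdorff admissible right topological group) whose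
multiplication is continuous at `(e, e)` is a topological group. -/
theorem topologicalGroup_of_chart_continuousAt_mul_one_one {G : Type*} [Group G]
    [TopologicalSpace G] [CompactSpace G] [T2Space G]
    (hright : ∀ h : G, Continuous fun g : G => g * h)
    (hadm : Dense {g : G | Continuous fun h : G => g * h})
    (hmul : ContinuousAt (fun p : G × G => p.1 * p.2) (1, 1)) :
    IsTopologicalGroup G := by
  have hleft := continuous_mul_left_of_dense_topologicalCentre hright hadm hmul
  have : SeparatelyContinuousMul G := ⟨hleft _, hright _⟩
  refine IsTopologicalGroup.of_nhds_one ?_ (tendsto_inv_nhds_one_of_continuousAt_mul hright hmul)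
    (fun a => by simpa using ((Homeomorph.mulLeft a).map_nhds_eq 1).symm) fun a => ?_
  · simpa [ContinuousAt, nhds_prod_eq, Function.uncurry_def] using hmul
  · simpa [Function.comp_def] using ((hright a⁻¹).comp (hleft a)).tendsto 1
end

section
/- (Milnes) Let G be a compact Hausdorff admissible right topological (CHART) group such that the topological center Λ(G), with the subspace topology, is a topological group (multiplication on Λ(G) is jointly continuous and inversion on Λ(G) is continuous). Then G is a topological group. -/
/-- The topological center of a right topological group: the set of elements `g`
for which the left translation `h ↦ g * h` is continuous. -/
def topCenter (G : Type*) [Group G] [TopologicalSpace G] : Set G :=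
  {g : G | Continuous fun h : G => g * h}

/-!
`G` is compact Hausdorff, hence regular, so a product `x * y` tends to `c` as soon as it
eventually lies in every closed neighbourhood `W` of `c`. Membership in `W` is a closed condition
in `x` (right translations are continuous) and, for `x ∈ Λ(G)`, in `y`; as `Λ(G)` is dense, joint
continuity of multiplication at `(g, 1)` therefore reduces to the case `x, y ∈ Λ(G)`. There it
follows from the inversion principle "`λ → g` in `Λ(G)` implies `λ⁻¹ → g⁻¹`" by writing
`λ μ = (μ⁻¹ λ⁻¹)⁻¹`. Inversion on `G` is then continuous because `G` is compact: its graph is the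
closed set `{(x, y) | x * y = 1}`.
-/

open Filter Topology Set

theorem Continuous.tendsto_nhdsWithin_prod_nhdsWithin {X Y Z : Type*} [TopologicalSpace X]
    [TopologicalSpace Y] [TopologicalSpace Z] {s : Set X} {t : Set Y} {f : X × Y → Z}
    (hf : Continuous fun p : s × t => f (p.1, p.2)) {a : X} (ha : a ∈ s) {b : Y} (hb : b ∈ t) :
    Tendsto f (𝓝[s] a ×ˢ 𝓝[t] b) (𝓝 (f (a, b))) := by
  rw [← map_nhds_subtype_val ⟨a, ha⟩, ← map_nhds_subtype_val ⟨b, hb⟩, prod_map_map_eq,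
    ← nhds_prod_eq, tendsto_map'_iff]
  exact hf.tendsto (⟨a, ha⟩, ⟨b, hb⟩)

theorem continuous_inv_of_compactSpace {G : Type*} [Group G] [TopologicalSpace G]
    [CompactSpace G] [ContinuousMul G] [T1Space G] : Continuous fun x : G => x⁻¹ := by
  refine continuous_iff_isClosed.mpr fun C hC => ?_
  have hgraph :
      (fun x : G => x⁻¹) ⁻¹' C = Prod.fst '' {p : G × G | p.1 * p.2 = 1 ∧ p.2 ∈ C} := by
    ext x
    simp [mul_eq_one_iff_eq_inv']
  rw [hgraph]
  exact isClosedMap_fst_of_compactSpace _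
    ((isClosed_singleton.preimage continuous_mul).inter (hC.preimage continuous_snd))

section RightTopological

variable {G : Type*} [Group G] [TopologicalSpace G]

theorem one_mem_topCenter : (1 : G) ∈ topCenter G := by
  simpa [topCenter] using continuous_id'

theorem mul_mem_topCenter {a b : G} (ha : a ∈ topCenter G) (hb : b ∈ topCenter G) :
    a * b ∈ topCenter G := by
  simpa [topCenter, mul_assoc] using ha.comp hb

theorem tendsto_mul_prod_nhds_of_one (hright : ∀ h : G, Continuous fun g : G => g * h)
    {l : Filter G} {c : G} (h : Tendsto (fun p : G × G => p.1 * p.2) (l ×ˢ 𝓝 1) (𝓝 c))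
    (w : G) : Tendsto (fun p : G × G => p.1 * p.2) (l ×ˢ 𝓝 w) (𝓝 (c * w)) := by
  have hshift : Tendsto (fun y => y * w⁻¹) (𝓝 w) (𝓝 1) :=
    (hright w⁻¹).tendsto' w 1 (mul_inv_cancel w)
  have := ((hright w).tendsto c).comp (h.comp (tendsto_id.prodMap hshift))
  simpa [Function.comp_def, mul_assoc] using this

theorem tendsto_inv_nhdsWithin_topCenter_one
    (hinv_mem : ∀ g ∈ topCenter G, g⁻¹ ∈ topCenter G)
    (hinv : Tendsto (fun x : G => x⁻¹) (𝓝[topCenter G] 1) (𝓝 1)) :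
    Tendsto (fun x : G => x⁻¹) (𝓝[topCenter G] 1) (𝓝[topCenter G] 1) :=
  tendsto_nhdsWithin_iff.mpr ⟨hinv, eventually_mem_nhdsWithin.mono hinv_mem⟩

variable [RegularSpace G]

theorem tendsto_mul_prod_nhds_of_nhdsWithin_topCenter_right (hΛ : Dense (topCenter G))
    {l : Filter G} {b c : G} (hl : ∀ᶠ x in l, x ∈ topCenter G)
    (h : Tendsto (fun p : G × G => p.1 * p.2) (l ×ˢ 𝓝[topCenter G] b) (𝓝 c)) :
    Tendsto (fun p : G × G => p.1 * p.2) (l ×ˢ 𝓝 b) (𝓝 c) := by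
  rw [(closed_nhds_basis c).tendsto_right_iff]
  rintro W ⟨hW, hWc⟩
  obtain ⟨U, hU, V, hV, hUV⟩ := mem_prod_iff.mp (h hW)
  obtain ⟨N, hNo, hbN, hNV⟩ := mem_nhdsWithin.mp hV
  filter_upwards [prod_mem_prod (inter_mem hU hl) (hNo.mem_nhds hbN)]
  rintro ⟨a, x⟩ ⟨⟨haU, haΛ⟩, hx⟩
  have hmaps : MapsTo (a * ·) (N ∩ topCenter G) W := fun m hm => hUV (mk_mem_prod haU (hNV hm))
  exact hmaps.closure_left haΛ hWc (hΛ.open_subset_closure_inter hNo hx)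

theorem tendsto_mul_prod_nhds_of_nhdsWithin_topCenter_left
    (hright : ∀ h : G, Continuous fun g : G => g * h) (hΛ : Dense (topCenter G))
    {l : Filter G} {a c : G}
    (h : Tendsto (fun p : G × G => p.1 * p.2) (𝓝[topCenter G] a ×ˢ l) (𝓝 c)) :
    Tendsto (fun p : G × G => p.1 * p.2) (𝓝 a ×ˢ l) (𝓝 c) := by
  rw [(closed_nhds_basis c).tendsto_right_iff]
  rintro W ⟨hW, hWc⟩
  obtain ⟨U, hU, V, hV, hUV⟩ := mem_prod_iff.mp (h hW)
  obtain ⟨N, hNo, haN, hNU⟩ := mem_nhdsWithin.mp hU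
  filter_upwards [prod_mem_prod (hNo.mem_nhds haN) hV]
  rintro ⟨x, y⟩ ⟨hx, hyV⟩
  have hmaps : MapsTo (· * y) (N ∩ topCenter G) W := fun m hm => hUV (mk_mem_prod (hNU hm) hyV)
  exact hmaps.closure_left (hright y) hWc (hΛ.open_subset_closure_inter hNo hx)

theorem tendsto_mul_nhdsWithin_topCenter_one_prod_nhds
    (hright : ∀ h : G, Continuous fun g : G => g * h)
    (hΛ : Dense (topCenter G))
    (hmul : Tendsto (fun p : G × G => p.1 * p.2)
      (𝓝[topCenter G] 1 ×ˢ 𝓝[topCenter G] 1) (𝓝 1))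
    (w : G) :
    Tendsto (fun p : G × G => p.1 * p.2) (𝓝[topCenter G] 1 ×ˢ 𝓝 w) (𝓝 w) := by
  have h := tendsto_mul_prod_nhds_of_nhdsWithin_topCenter_right hΛ self_mem_nhdsWithin hmul
  simpa using tendsto_mul_prod_nhds_of_one hright h w

theorem tendsto_inv_nhdsWithin_topCenter
    (hright : ∀ h : G, Continuous fun g : G => g * h)
    (hΛ : Dense (topCenter G))
    (hinv_mem : ∀ g ∈ topCenter G, g⁻¹ ∈ topCenter G)
    (hmul : Tendsto (fun p : G × G => p.1 * p.2)
      (𝓝[topCenter G] 1 ×ˢ 𝓝[topCenter G] 1) (𝓝 1))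
    (hinv : Tendsto (fun x : G => x⁻¹) (𝓝[topCenter G] 1) (𝓝 1)) (g : G) :
    Tendsto (fun x : G => x⁻¹) (𝓝[topCenter G] g) (𝓝 g⁻¹) := by
  suffices h : Tendsto (fun x => x⁻¹ * g) (𝓝[topCenter G] g) (𝓝 1) by
    simpa [Function.comp_def] using ((hright g⁻¹).tendsto 1).comp h
  have hdiv : Tendsto (fun p : G × G => p.1⁻¹ * p.2)
      (𝓝[topCenter G] 1 ×ˢ 𝓝[topCenter G] 1) (𝓝 1) :=
    hmul.comp ((tendsto_inv_nhdsWithin_topCenter_one hinv_mem hinv).prodMap tendsto_id)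
  rw [(closed_nhds_basis 1).tendsto_right_iff]
  rintro W ⟨hW, hWc⟩
  obtain ⟨U, hU, V, hV, hUV⟩ := mem_prod_iff.mp (hdiv hW)
  obtain ⟨N, hNo, h1N, hNUV⟩ := mem_nhdsWithin.mp (inter_mem hU hV)
  -- `A = l₀⁻¹ N` is a neighbourhood of `g` with `(A ∩ Λ)⁻¹ (A ∩ Λ) ⊆ W`.
  obtain ⟨l₀, hl₀, hl₀g⟩ :=
    hΛ.exists_mem_open (hNo.preimage (hright g)) ⟨g⁻¹, by simpa using h1N⟩
  have hAo : IsOpen ((l₀ * ·) ⁻¹' N) := hNo.preimage hl₀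
  filter_upwards [inter_mem_nhdsWithin _ (hAo.mem_nhds hl₀g)]
  rintro x ⟨hxΛ, hxA⟩
  have hmaps : MapsTo (x⁻¹ * ·) ((l₀ * ·) ⁻¹' N ∩ topCenter G) W := by
    rintro m ⟨hmA, hmΛ⟩
    have := hUV (mk_mem_prod (hNUV ⟨hxA, mul_mem_topCenter hl₀ hxΛ⟩).1
      (hNUV ⟨hmA, mul_mem_topCenter hl₀ hmΛ⟩).2)
    simpa [mul_assoc] using this
  exact hmaps.closure_left (hinv_mem x hxΛ) hWc (hΛ.open_subset_closure_inter hAo hl₀g)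

theorem tendsto_mul_nhdsWithin_topCenter_prod
    (hright : ∀ h : G, Continuous fun g : G => g * h)
    (hΛ : Dense (topCenter G))
    (hinv_mem : ∀ g ∈ topCenter G, g⁻¹ ∈ topCenter G)
    (hmul : Tendsto (fun p : G × G => p.1 * p.2)
      (𝓝[topCenter G] 1 ×ˢ 𝓝[topCenter G] 1) (𝓝 1))
    (hinv : Tendsto (fun x : G => x⁻¹) (𝓝[topCenter G] 1) (𝓝 1)) (g : G) :
    Tendsto (fun p : G × G => p.1 * p.2)
      (𝓝[topCenter G] g ×ˢ 𝓝[topCenter G] 1) (𝓝 g) := by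
  have hΛΛ : ∀ᶠ p : G × G in 𝓝[topCenter G] g ×ˢ 𝓝[topCenter G] 1,
      p.1 ∈ topCenter G ∧ p.2 ∈ topCenter G :=
    prod_mem_prod self_mem_nhdsWithin self_mem_nhdsWithin
  have hrev : Tendsto (fun p : G × G => p.2⁻¹ * p.1⁻¹)
      (𝓝[topCenter G] g ×ˢ 𝓝[topCenter G] 1) (𝓝[topCenter G] g⁻¹) := by
    refine tendsto_nhdsWithin_iff.mpr ⟨?_, hΛΛ.mono fun p hp =>
      mul_mem_topCenter (hinv_mem _ hp.2) (hinv_mem _ hp.1)⟩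
    exact (tendsto_mul_nhdsWithin_topCenter_one_prod_nhds hright hΛ hmul g⁻¹).comp
      (((tendsto_inv_nhdsWithin_topCenter_one hinv_mem hinv).comp tendsto_snd).prodMk
        ((tendsto_inv_nhdsWithin_topCenter hright hΛ hinv_mem hmul hinv g).comp tendsto_fst))
  simpa [Function.comp_def] using
    (tendsto_inv_nhdsWithin_topCenter hright hΛ hinv_mem hmul hinv g⁻¹).comp hrev

theorem continuous_mul_of_topCenter
    (hright : ∀ h : G, Continuous fun g : G => g * h)
    (hΛ : Dense (topCenter G))
    (hinv_mem : ∀ g ∈ topCenter G, g⁻¹ ∈ topCenter G)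
    (hmul : Tendsto (fun p : G × G => p.1 * p.2)
      (𝓝[topCenter G] 1 ×ˢ 𝓝[topCenter G] 1) (𝓝 1))
    (hinv : Tendsto (fun x : G => x⁻¹) (𝓝[topCenter G] 1) (𝓝 1)) :
    Continuous fun p : G × G => p.1 * p.2 := by
  refine continuous_iff_continuousAt.mpr fun ⟨g, h⟩ => ?_
  have hg := tendsto_mul_prod_nhds_of_nhdsWithin_topCenter_left hright hΛ
    (tendsto_mul_prod_nhds_of_nhdsWithin_topCenter_right hΛ self_mem_nhdsWithin
      (tendsto_mul_nhdsWithin_topCenter_prod hright hΛ hinv_mem hmul hinv g))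
  rw [ContinuousAt, nhds_prod_eq]
  exact tendsto_mul_prod_nhds_of_one hright hg h

end RightTopological

/-- (Milnes) Let `G` be a CHART group (compact Hausdorff admissible right
topological group) such that the topological center `Λ(G)`, with the subspace
topology, is a topological group (it is closed under inversion, multiplication
on it is jointly continuous and inversion on it is continuous). Then `G` is a
topological group. -/
theorem topologicalGroup_of_chart_center_topologicalGroup {G : Type*} [Group G]
    [TopologicalSpace G] [CompactSpace G] [T2Space G]
    (hright : ∀ h : G, Continuous fun g : G => g * h)
    (hadm : Dense (topCenter G))
    (hinv_mem : ∀ g ∈ topCenter G, g⁻¹ ∈ topCenter G)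
    (hmul : Continuous fun p : ↥(topCenter G) × ↥(topCenter G) => (p.1 : G) * (p.2 : G))
    (hinv : Continuous fun g : ↥(topCenter G) => (g : G)⁻¹) :
    IsTopologicalGroup G := by
  have hmul₁ : Tendsto (fun p : G × G => p.1 * p.2)
      (𝓝[topCenter G] 1 ×ˢ 𝓝[topCenter G] 1) (𝓝 1) := by
    simpa using hmul.tendsto_nhdsWithin_prod_nhdsWithin (f := fun p : G × G => p.1 * p.2)
      one_mem_topCenter one_mem_topCenter
  have hinv₁ : Tendsto (fun x : G => x⁻¹) (𝓝[topCenter G] 1) (𝓝 1) := by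
    simpa [ContinuousWithinAt] using
      (continuousOn_iff_continuous_domRestrict.mpr hinv).continuousWithinAt one_mem_topCenter
  have : ContinuousMul G := ⟨continuous_mul_of_topCenter hright hadm hinv_mem hmul₁ hinv₁⟩
  exact { continuous_inv := continuous_inv_of_compactSpace }
end
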